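/- arXiv:1606.03161 — 2 statements merged into one kernel-verified Lean document; each statement's English description precedes it below -/
import Mathlib

section
/- Let {S_t} be the evolving set process for a kernel K on a finite state space Ω with stationary distribution π, and let τ = min{t ≥ 0 : S_t ∈ {∅,Ω}} be almost surely finite. Then for every t ≥ 0, every S with π(S) > 0, and every y ∈ Ω: |K^t(S,y) − π(y)| ≤ (π(y)/π(S)) · P_{S_0=S}[τ > t]. -/
open MeasureTheory ProbabilityTheory Finset Matrix

/-! Given `S_t`, a state `y` enters `S_{t+1}` with probability `π(S_t) K(S_t, y) / π(y)`, because
the threshold is an independent uniform. By induction `π(y) P[y ∈ S_t] = π(S₀) K^t(S₀, y)`, and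
summing over `y` gives `E[π(S_t)] = π(S₀)`. Hence
`π(S₀) (K^t(S₀, y) - π(y)) = π(y) E[1_{y ∈ S_t} - π(S_t)]`. The integrand has absolute value at
most `1`, and it vanishes once `S_t` is absorbed, which has happened by time `t` on `{τ ≤ t}`. -/

theorem eq_pow_of_succ_eq_mul {M : Type*} [Monoid M] {A : ℕ → M} {a : M} (h0 : A 0 = 1)
    (hsucc : ∀ t, A (t + 1) = a * A t) (t : ℕ) : A t = a ^ t := by
  induction t with
  | zero => rw [h0, pow_zero]
  | succ t ih => rw [hsucc, ih, pow_succ']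

theorem Matrix.eq_vecMul_pow_of_succ_eq_vecMul {n R : Type*} [Fintype n] [DecidableEq n]
    [Semiring R] {v : ℕ → n → R} {M : Matrix n n R} (hsucc : ∀ t, v (t + 1) = v t ᵥ* M)
    (t : ℕ) : v t = v 0 ᵥ* M ^ t := by
  induction t with
  | zero => simp
  | succ t ih => rw [hsucc, ih, vecMul_vecMul, pow_succ]

section Probability

variable {E : Type*} [MeasurableSpace E] {P : Measure E}

theorem measureReal_preimage_Iic_of_map_eq_uniform {U : E → ℝ} (hU : Measurable U)
    (hunif : P.map U = volume.restrict (Set.Icc 0 1)) {r : ℝ} (hr0 : 0 ≤ r) (hr1 : r ≤ 1) :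
    P.real (U ⁻¹' Set.Iic r) = r := by
  have hinter : Set.Iic r ∩ Set.Icc 0 1 = Set.Icc 0 r := by
    ext u
    simp only [Set.mem_inter_iff, Set.mem_Iic, Set.mem_Icc]
    constructor <;> intro h <;> refine ⟨?_, ?_⟩ <;> grind
  rw [measureReal_def, ← Measure.map_apply hU measurableSet_Iic, hunif,
    Measure.restrict_apply measurableSet_Iic, hinter, Real.volume_Icc, sub_zero,
    ENNReal.toReal_ofReal hr0]

theorem ae_mem_Ioc_of_map_eq_uniform {U : E → ℝ} (hU : Measurable U)
    (hunif : P.map U = volume.restrict (Set.Icc 0 1)) : ∀ᵐ ω ∂P, U ω ∈ Set.Ioc 0 1 := by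
  refine ae_of_ae_map hU.aemeasurable ?_
  rw [hunif, ← Measure.restrict_congr_set Ioc_ae_eq_Icc]
  exact ae_restrict_mem measurableSet_Ioc

theorem IndepFun.of_measurable_natural {U : ℕ → E → ℝ} (hU : ∀ t, StronglyMeasurable (U t))
    (hUindep : iIndepFun U P) {α : Type*} [MeasurableSpace α] {X : E → α} {t : ℕ}
    (hX : Measurable[Filtration.natural U hU t] X) : IndepFun (U (t + 1)) X P := by
  rw [IndepFun_iff_Indep]
  exact indep_of_indep_of_le_right (hUindep.indep_comap_natural_of_lt hU t.lt_succ_self)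
    hX.comap_le

variable [IsFiniteMeasure P] {α : Type*} [Fintype α] [MeasurableSpace α]
  [MeasurableSingletonClass α] {X : E → α}

theorem measureReal_eq_sum_inter_preimage_singleton (hX : Measurable X) (s : Set E) :
    P.real s = ∑ a, P.real (s ∩ X ⁻¹' {a}) := by
  have := sum_measureReal_preimage_singleton (μ := P.restrict s) univ
    (fun a _ => hX (measurableSet_singleton a))
  simp only [coe_univ, Set.preimage_univ, measureReal_restrict_apply_univ] at this
  rw [← this]
  refine sum_congr rfl fun a _ => ?_
  rw [measureReal_restrict_apply (hX (measurableSet_singleton a)), Set.inter_comm]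

theorem measureReal_setOf_eq_sum_ite (hX : Measurable X) (p : α → Prop) [DecidablePred p] :
    P.real {ω | p (X ω)} = ∑ a, if p a then P.real (X ⁻¹' {a}) else 0 := by
  rw [measureReal_eq_sum_inter_preimage_singleton hX]
  refine sum_congr rfl fun a _ => ?_
  split_ifs with ha
  · congr 1
    ext ω
    simp only [Set.mem_inter_iff, Set.mem_ofPred_eq, Set.mem_preimage, Set.mem_singleton_iff]
    exact ⟨And.right, fun h => ⟨h ▸ ha, h⟩⟩
  · convert measureReal_empty (μ := P)
    ext ω
    simp only [Set.mem_inter_iff, Set.mem_ofPred_eq, Set.mem_preimage, Set.mem_singleton_iff,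
      Set.mem_empty_iff_false, iff_false, not_and]
    exact fun h hω => ha (hω ▸ h)

theorem abs_sum_mul_measureReal_preimage_le (hX : Measurable X) {f : α → ℝ} {c : ℝ}
    (p : α → Prop) [DecidablePred p] (hfc : ∀ a, |f a| ≤ c) (hfp : ∀ a, ¬ p a → f a = 0) :
    |∑ a, f a * P.real (X ⁻¹' {a})| ≤ c * P.real {ω | p (X ω)} := by
  rw [measureReal_setOf_eq_sum_ite hX, mul_sum]
  refine (abs_sum_le_sum_abs _ _).trans (sum_le_sum fun a _ => ?_)
  rw [abs_mul, abs_of_nonneg measureReal_nonneg]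
  split_ifs with ha
  · exact mul_le_mul_of_nonneg_right (hfc a) measureReal_nonneg
  · simp [hfp a ha]

theorem measureReal_le_comp_eq_sum [IsProbabilityMeasure P] {U : E → ℝ} (hU : Measurable U)
    (hunif : P.map U = volume.restrict (Set.Icc 0 1)) (hX : Measurable X) (hind : IndepFun U X P)
    {h : α → ℝ} (h0 : ∀ a, 0 ≤ h a) (h1 : ∀ a, h a ≤ 1) :
    P.real {ω | U ω ≤ h (X ω)} = ∑ a, h a * P.real (X ⁻¹' {a}) := by
  rw [measureReal_eq_sum_inter_preimage_singleton hX]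
  refine sum_congr rfl fun a _ => ?_
  have hfiber : {ω | U ω ≤ h (X ω)} ∩ X ⁻¹' {a} = U ⁻¹' Set.Iic (h a) ∩ X ⁻¹' {a} := by
    ext ω
    simp only [Set.mem_inter_iff, Set.mem_ofPred_eq, Set.mem_preimage, Set.mem_singleton_iff,
      Set.mem_Iic]
    exact ⟨fun ⟨hle, hω⟩ => ⟨hω ▸ hle, hω⟩, fun ⟨hle, hω⟩ => ⟨hω ▸ hle, hω⟩⟩
  rw [hfiber, measureReal_def,
    hind.measure_inter_preimage_eq_mul _ _ measurableSet_Iic (measurableSet_singleton a),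
    ENNReal.toReal_mul, ← measureReal_def, ← measureReal_def,
    measureReal_preimage_Iic_of_map_eq_uniform hU hunif (h0 a) (h1 a)]

theorem sum_mul_measureReal_mem {Ω : Type*} [Fintype Ω] {S : E → Finset Ω} (hS : Measurable S)
    (c : Ω → ℝ) :
    ∑ x, c x * P.real {ω | x ∈ S ω} = ∑ A, (∑ x ∈ A, c x) * P.real (S ⁻¹' {A}) := by
  classical
  calc ∑ x, c x * P.real {ω | x ∈ S ω}
      = ∑ x, ∑ A, if x ∈ A then c x * P.real (S ⁻¹' {A}) else 0 := by
        refine sum_congr rfl fun x _ => ?_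
        rw [measureReal_setOf_eq_sum_ite hS (x ∈ ·), mul_sum]
        simp only [mul_ite, mul_zero]
    _ = ∑ A, (∑ x ∈ A, c x) * P.real (S ⁻¹' {A}) := by
        rw [sum_comm]
        refine sum_congr rfl fun A _ => ?_
        rw [← sum_filter, sum_mul, filter_mem_eq_inter, univ_inter]

end Probability

section EvolvingSet

variable {Ω : Type*} [Fintype Ω] (π : Ω → ℝ) (K : Ω → Ω → ℝ)

noncomputable def evolvingSetStep (u : ℝ) (A : Finset Ω) : Finset Ω :=
  univ.filter fun y => u * π y ≤ ∑ x ∈ A, π x * K x y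

/-- The absorbing states `∅` and `Ω` of the paper, up to `π`-null sets: from a `π`-null set the
step moves to the `π`-null set `{y | π y = 0}`, not to `∅`. -/
def IsAbsorbing (A : Finset Ω) : Prop :=
  (∀ x ∈ A, π x = 0) ∨ A = univ

variable {π K}

theorem Measurable.evolvingSetStep {E : Type*} {mE : MeasurableSpace E} {u : E → ℝ}
    {A : E → Finset Ω} (hu : Measurable u) (hA : Measurable A) :
    Measurable fun ω => evolvingSetStep π K (u ω) (A ω) := by
  rw [measurable_finset_iff]
  intro y
  simp only [_root_.evolvingSetStep, mem_filter, mem_univ, true_and]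
  exact measurableSet_setOfPred.1 (measurableSet_le (hu.mul_const _)
    ((measurable_of_finite fun B : Finset Ω => ∑ x ∈ B, π x * K x y).comp hA))

theorem IsAbsorbing.evolvingSetStep (hπnonneg : ∀ x, 0 ≤ π x)
    (hstat : ∀ y, ∑ x, π x * K x y = π y) {A : Finset Ω} (hA : IsAbsorbing π A) {u : ℝ}
    (hu : u ∈ Set.Ioc 0 1) : IsAbsorbing π (evolvingSetStep π K u A) := by
  rcases hA with hnull | rfl
  · left
    intro y hy
    have hflow : ∑ x ∈ A, π x * K x y = 0 := sum_eq_zero fun x hx => by rw [hnull x hx, zero_mul]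
    simp only [_root_.evolvingSetStep, mem_filter, mem_univ, true_and, hflow] at hy
    exact le_antisymm (nonpos_of_mul_nonpos_right hy hu.1) (hπnonneg y)
  · right
    refine eq_univ_of_forall fun y => ?_
    simp only [_root_.evolvingSetStep, mem_filter, mem_univ, true_and, hstat]
    exact mul_le_of_le_one_left (hπnonneg y) hu.2

theorem isAbsorbing_of_le (hπnonneg : ∀ x, 0 ≤ π x) (hstat : ∀ y, ∑ x, π x * K x y = π y)
    {u : ℕ → ℝ} {A : ℕ → Finset Ω} (hu : ∀ t, u t ∈ Set.Ioc 0 1)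
    (hA : ∀ t, A (t + 1) = evolvingSetStep π K (u (t + 1)) (A t)) {s t : ℕ}
    (hs : IsAbsorbing π (A s)) (hst : s ≤ t) : IsAbsorbing π (A t) := by
  induction t, hst using Nat.le_induction with
  | base => exact hs
  | succ t _ ih => exact hA t ▸ ih.evolvingSetStep hπnonneg hstat (hu (t + 1))

variable {E : Type*} [MeasurableSpace E] {P : Measure E} [IsProbabilityMeasure P]

theorem mul_measureReal_mem_evolvingSetStep (hKnonneg : ∀ x y, 0 ≤ K x y)
    (hπnonneg : ∀ x, 0 ≤ π x) (hstat : ∀ y, ∑ x, π x * K x y = π y) {U : E → ℝ}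
    (hU : Measurable U) (hunif : P.map U = volume.restrict (Set.Icc 0 1)) {S : E → Finset Ω}
    (hS : Measurable S) (hind : IndepFun U S P) (y : Ω) :
    π y * P.real {ω | y ∈ evolvingSetStep π K (U ω) (S ω)}
      = ∑ x, π x * P.real {ω | x ∈ S ω} * K x y := by
  have hflow_nonneg : ∀ x, 0 ≤ π x * K x y := fun x => mul_nonneg (hπnonneg x) (hKnonneg x y)
  rcases (hπnonneg y).eq_or_lt with hπy | hπy
  · have hflow : ∀ x, π x * K x y = 0 := fun x =>
      (sum_eq_zero_iff_of_nonneg fun x _ => hflow_nonneg x).1 (by rw [hstat, ← hπy]) x (mem_univ x)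
    simp [← hπy, mul_right_comm _ _ (K _ y), hflow]
  set g : Finset Ω → ℝ := fun A => ∑ x ∈ A, π x * K x y
  have hmem : ∀ ω, y ∈ evolvingSetStep π K (U ω) (S ω) ↔ U ω ≤ g (S ω) / π y := fun ω => by
    simp [_root_.evolvingSetStep, g, le_div_iff₀ hπy]
  have hg_le : ∀ A, g A ≤ π y := fun A =>
    (sum_le_sum_of_subset_of_nonneg (subset_univ A) fun x _ _ => hflow_nonneg x).trans_eq (hstat y)
  simp_rw [hmem]
  rw [measureReal_le_comp_eq_sum hU hunif hS hind
      (fun A => div_nonneg (sum_nonneg fun x _ => hflow_nonneg x) hπy.le)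
      (fun A => (div_le_one hπy).2 (hg_le A)), mul_sum]
  simp_rw [mul_right_comm _ _ (K _ y), sum_mul_measureReal_mem hS]
  refine sum_congr rfl fun A _ => ?_
  field_simp

theorem abs_mul_measureReal_mem_sub_le (hπnonneg : ∀ x, 0 ≤ π x) (hπsum : ∑ x, π x = 1)
    {S : E → Finset Ω} (hS : Measurable S) (y : Ω) :
    |π y * P.real {ω | y ∈ S ω} - π y * ∑ x, π x * P.real {ω | x ∈ S ω}|
      ≤ π y * P.real {ω | ¬ IsAbsorbing π (S ω)} := by
  classical
  set f : Finset Ω → ℝ := fun A => π y * ((if y ∈ A then 1 else 0) - ∑ x ∈ A, π x)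
  have hsum : π y * P.real {ω | y ∈ S ω} - π y * ∑ x, π x * P.real {ω | x ∈ S ω}
      = ∑ A, f A * P.real (S ⁻¹' {A}) := by
    rw [measureReal_setOf_eq_sum_ite hS (y ∈ ·), sum_mul_measureReal_mem hS, mul_sum, mul_sum,
      ← sum_sub_distrib]
    refine sum_congr rfl fun A _ => ?_
    simp only [f]
    split_ifs <;> ring
  have hmass_le : ∀ A : Finset Ω, ∑ x ∈ A, π x ≤ 1 := fun A =>
    (sum_le_sum_of_subset_of_nonneg (subset_univ A) fun x _ _ => hπnonneg x).trans_eq hπsum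
  have hf_le : ∀ A, |f A| ≤ π y := fun A => by
    rw [abs_mul, abs_of_nonneg (hπnonneg y)]
    refine mul_le_of_le_one_right (hπnonneg y) (abs_le.2 ⟨?_, ?_⟩)
    · have := hmass_le A
      split_ifs <;> linarith
    · have := sum_nonneg fun x (_ : x ∈ A) => hπnonneg x
      split_ifs <;> linarith
  have hf_absorbing : ∀ A, IsAbsorbing π A → f A = 0 := fun A hA => by
    rcases hA with hnull | rfl
    · by_cases hy : y ∈ A <;> simp [f, hy, hnull, sum_eq_zero hnull]
    · simp [f, hπsum]
  rw [hsum]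
  exact abs_sum_mul_measureReal_preimage_le hS _ hf_le fun A hA => hf_absorbing A (not_not.1 hA)

theorem measurable_natural_evolvingSet {U : ℕ → E → ℝ} (hU : ∀ t, StronglyMeasurable (U t))
    {S : ℕ → E → Finset Ω} {S₀ : Finset Ω} (hS0 : ∀ ω, S 0 ω = S₀)
    (hSrec : ∀ t ω, S (t + 1) ω = evolvingSetStep π K (U (t + 1) ω) (S t ω)) (t : ℕ) :
    Measurable[Filtration.natural U hU t] (S t) := by
  induction t with
  | zero => simp [funext hS0]
  | succ t ih =>
    rw [funext (hSrec t)]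
    exact ((Filtration.stronglyAdapted_natural hU (t + 1)).measurable).evolvingSetStep
      (ih.mono ((Filtration.natural U hU).mono t.le_succ) le_rfl)

theorem measurable_evolvingSet {U : ℕ → E → ℝ} (hUmeas : ∀ t, Measurable (U t))
    {S : ℕ → E → Finset Ω} {S₀ : Finset Ω} (hS0 : ∀ ω, S 0 ω = S₀)
    (hSrec : ∀ t ω, S (t + 1) ω = evolvingSetStep π K (U (t + 1) ω) (S t ω)) (t : ℕ) :
    Measurable (S t) :=
  (measurable_natural_evolvingSet (fun t => (hUmeas t).stronglyMeasurable) hS0 hSrec t).mono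
    (Filtration.le _ t) le_rfl

theorem measureReal_not_isAbsorbing_le (hπnonneg : ∀ x, 0 ≤ π x)
    (hstat : ∀ y, ∑ x, π x * K x y = π y) {U : ℕ → E → ℝ} (hUmeas : ∀ t, Measurable (U t))
    (hUunif : ∀ t, P.map (U t) = volume.restrict (Set.Icc 0 1)) {S : ℕ → E → Finset Ω}
    (hSrec : ∀ t ω, S (t + 1) ω = evolvingSetStep π K (U (t + 1) ω) (S t ω)) {τ : E → ℕ}
    (hτ : ∀ᵐ ω ∂P, IsAbsorbing π (S (τ ω) ω)) (t : ℕ) :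
    P.real {ω | ¬ IsAbsorbing π (S t ω)} ≤ P.real {ω | t < τ ω} := by
  refine ENNReal.toReal_mono (measure_ne_top P _) (measure_mono_ae ?_)
  filter_upwards [hτ, ae_all_iff.2 fun t => ae_mem_Ioc_of_map_eq_uniform (hUmeas t) (hUunif t)]
    with ω hτω hU hnot
  by_contra hle
  exact hnot (isAbsorbing_of_le (A := fun t => S t ω) hπnonneg hstat hU (fun t => hSrec t ω) hτω
    (not_lt.1 hle))

variable [DecidableEq Ω]

theorem mul_measureReal_mem_evolvingSet (hKnonneg : ∀ x y, 0 ≤ K x y)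
    (hπnonneg : ∀ x, 0 ≤ π x) (hstat : ∀ y, ∑ x, π x * K x y = π y) {U : ℕ → E → ℝ}
    (hUmeas : ∀ t, Measurable (U t))
    (hUunif : ∀ t, P.map (U t) = volume.restrict (Set.Icc 0 1)) (hUindep : iIndepFun U P)
    {S : ℕ → E → Finset Ω} {S₀ : Finset Ω} (hS0 : ∀ ω, S 0 ω = S₀)
    (hSrec : ∀ t ω, S (t + 1) ω = evolvingSetStep π K (U (t + 1) ω) (S t ω)) (t : ℕ) (y : Ω) :
    π y * P.real {ω | y ∈ S t ω} = ∑ x ∈ S₀, π x * (of K ^ t) x y := by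
  have hU : ∀ t, StronglyMeasurable (U t) := fun t => (hUmeas t).stronglyMeasurable
  have hSnat := measurable_natural_evolvingSet hU hS0 hSrec
  set v : ℕ → Ω → ℝ := fun t x => π x * P.real {ω | x ∈ S t ω}
  have hv0 : v 0 = fun x => if x ∈ S₀ then π x else 0 := funext fun x => by
    by_cases hx : x ∈ S₀ <;> simp [v, hS0, hx]
  have hvsucc : ∀ t, v (t + 1) = v t ᵥ* of K := fun t => funext fun y => by
    simp only [v, hSrec, vecMul, dotProduct, of_apply]
    exact mul_measureReal_mem_evolvingSetStep hKnonneg hπnonneg hstat (hUmeas (t + 1))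
      (hUunif (t + 1)) (measurable_evolvingSet hUmeas hS0 hSrec t)
      (IndepFun.of_measurable_natural hU hUindep (hSnat t)) y
  change v t y = _
  rw [eq_vecMul_pow_of_succ_eq_vecMul hvsucc, hv0, vecMul, dotProduct]
  simp_rw [ite_mul, zero_mul]
  rw [← sum_filter, filter_mem_eq_inter, univ_inter]

theorem sum_mul_measureReal_mem_evolvingSet (hKnonneg : ∀ x y, 0 ≤ K x y)
    (hKrow : ∀ x, ∑ y, K x y = 1) (hπnonneg : ∀ x, 0 ≤ π x)
    (hstat : ∀ y, ∑ x, π x * K x y = π y) {U : ℕ → E → ℝ}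
    (hUmeas : ∀ t, Measurable (U t))
    (hUunif : ∀ t, P.map (U t) = volume.restrict (Set.Icc 0 1)) (hUindep : iIndepFun U P)
    {S : ℕ → E → Finset Ω} {S₀ : Finset Ω} (hS0 : ∀ ω, S 0 ω = S₀)
    (hSrec : ∀ t ω, S (t + 1) ω = evolvingSetStep π K (U (t + 1) ω) (S t ω)) (t : ℕ) :
    ∑ y, π y * P.real {ω | y ∈ S t ω} = ∑ x ∈ S₀, π x := by
  have hK : of K ∈ rowStochastic ℝ Ω := mem_rowStochastic_iff_sum.2 ⟨hKnonneg, hKrow⟩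
  simp_rw [mul_measureReal_mem_evolvingSet hKnonneg hπnonneg hstat hUmeas hUunif hUindep hS0
    hSrec t]
  rw [sum_comm]
  simp_rw [← mul_sum, sum_row_of_mem_rowStochastic (pow_mem hK t), mul_one]

end EvolvingSet

theorem evolving_set_convergence_bound_general
    {E Ω : Type*} [MeasurableSpace E] [Fintype Ω] [DecidableEq Ω]
    (P : Measure E) [IsProbabilityMeasure P]
    (K : Ω → Ω → ℝ) (π : Ω → ℝ)
    (hKnonneg : ∀ x y, 0 ≤ K x y) (hKrow : ∀ x, ∑ y, K x y = 1)
    (hπnonneg : ∀ x, 0 ≤ π x) (hπsum : ∑ x, π x = 1)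
    (hstat : ∀ y, ∑ x, π x * K x y = π y)
    (U : ℕ → E → ℝ) (hUmeas : ∀ t, Measurable (U t))
    (hUunif : ∀ t, P.map (U t) = (volume : Measure ℝ).restrict (Set.Icc 0 1))
    (hUindep : iIndepFun U P)
    (S : ℕ → E → Finset Ω) (S₀ : Finset Ω)
    (hS0 : ∀ ω, S 0 ω = S₀)
    (hSrec : ∀ t ω, S (t+1) ω
      = univ.filter (fun y => U (t+1) ω * π y ≤ ∑ x ∈ S t ω, π x * K x y))
    (hπS0 : 0 < ∑ x ∈ S₀, π x)
    (Kpow : ℕ → Ω → Ω → ℝ)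
    (hKpow0 : ∀ x y, Kpow 0 x y = if x = y then 1 else 0)
    (hKpowS : ∀ t x y, Kpow (t+1) x y = ∑ z, K x z * Kpow t z y)
    (τ : E → ℕ)
    (hτhit : ∀ᵐ ω ∂P, S (τ ω) ω = ∅ ∨ S (τ ω) ω = Finset.univ) :
    ∀ (t : ℕ) (y : Ω),
      |(∑ x ∈ S₀, π x * Kpow t x y) / (∑ x ∈ S₀, π x) - π y|
        ≤ π y / (∑ x ∈ S₀, π x) * (P {ω | t < τ ω}).toReal := by
  intro t y
  have hKpow : of K ^ t = of (Kpow t) := (eq_pow_of_succ_eq_mul (A := fun t => of (Kpow t))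
    (by ext; simp [hKpow0, one_apply]) (fun t => by ext; simp [hKpowS, mul_apply]) t).symm
  have hocc := mul_measureReal_mem_evolvingSet hKnonneg hπnonneg hstat hUmeas hUunif hUindep hS0
    hSrec t y
  have hmass := sum_mul_measureReal_mem_evolvingSet hKnonneg hKrow hπnonneg hstat hUmeas hUunif
    hUindep hS0 hSrec t
  have hbound := abs_mul_measureReal_mem_sub_le (P := P) hπnonneg hπsum
    (measurable_evolvingSet hUmeas hS0 hSrec t) y
  rw [hocc, hmass, hKpow] at hbound
  have htail := measureReal_not_isAbsorbing_le (τ := τ) hπnonneg hstat hUmeas hUunif hSrec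
    (hτhit.mono fun ω h => by rcases h with h | h <;> simp [IsAbsorbing, h]) t
  rw [div_sub' hπS0.ne', mul_comm (∑ x ∈ S₀, π x), abs_div, abs_of_pos hπS0, div_mul_eq_mul_div,
    div_le_div_iff_of_pos_right hπS0]
  exact hbound.trans (mul_le_mul_of_nonneg_left htail (hπnonneg y))

/-- Convergence bound via the evolving set process: with `τ` the (a.s. finite)
hitting time of the absorbing states `∅`, `Ω`, for every `t`, every starting set `S₀`
with `π(S₀) > 0` and every `y`,
`|K^t(S₀,y) − π(y)| ≤ (π(y)/π(S₀)) · P[τ > t]`. -/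
theorem evolving_set_convergence_bound
    {E Ω : Type*} [MeasurableSpace E] [Fintype Ω] [DecidableEq Ω]
    (P : Measure E) [IsProbabilityMeasure P]
    (K : Ω → Ω → ℝ) (π : Ω → ℝ)
    (hKnonneg : ∀ x y, 0 ≤ K x y) (hKrow : ∀ x, ∑ y, K x y = 1)
    (hπnonneg : ∀ x, 0 ≤ π x) (hπsum : ∑ x, π x = 1)
    (hstat : ∀ y, ∑ x, π x * K x y = π y)
    (U : ℕ → E → ℝ) (hUmeas : ∀ t, Measurable (U t))
    (hUunif : ∀ t, P.map (U t) = (volume : Measure ℝ).restrict (Set.Icc 0 1))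
    (hUindep : iIndepFun U P)
    (S : ℕ → E → Finset Ω) (S₀ : Finset Ω)
    (hS0 : ∀ ω, S 0 ω = S₀)
    (hSrec : ∀ t ω, S (t+1) ω
      = univ.filter (fun y => U (t+1) ω * π y ≤ ∑ x ∈ S t ω, π x * K x y))
    (hSmeas : ∀ t, @Measurable E (Finset Ω) _ ⊤ (S t))
    (hπS0 : 0 < ∑ x ∈ S₀, π x)
    (Kpow : ℕ → Ω → Ω → ℝ)
    (hKpow0 : ∀ x y, Kpow 0 x y = if x = y then 1 else 0)
    (hKpowS : ∀ t x y, Kpow (t+1) x y = ∑ z, K x z * Kpow t z y)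
    (τ : E → ℕ)
    (hτhit : ∀ᵐ ω ∂P, S (τ ω) ω = ∅ ∨ S (τ ω) ω = Finset.univ)
    (hτmin : ∀ᵐ ω ∂P, ∀ t : ℕ, (S t ω = ∅ ∨ S t ω = Finset.univ) → τ ω ≤ t) :
    ∀ (t : ℕ) (y : Ω),
      |(∑ x ∈ S₀, π x * Kpow t x y) / (∑ x ∈ S₀, π x) - π y|
        ≤ π y / (∑ x ∈ S₀, π x) * (P {ω | t < τ ω}).toReal :=
  evolving_set_convergence_bound_general P K π hKnonneg hKrow hπnonneg hπsum hstat U hUmeas hUunif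
    hUindep S S₀ hS0 hSrec hπS0 Kpow hKpow0 hKpowS τ hτhit
end

section
/- Let K̂ be a lift of a kernel K on a finite state space via a map f, with stationary distributions π̂ and π and conductances Φ̂ and Φ respectively. Then Φ̂ ≤ Φ. -/
open Finset

/-!
A set `S` of the original chain pulls back to `f⁻¹ S` in the lifted chain. Taking `A = univ` in
the lifting identity shows that `f⁻¹ S` has the same stationary mass as `S`, and taking `A = Sᶜ`
that it has the same ergodic flow out of it. So every ratio in the infimum defining `Φ` also
occurs in the infimum defining `Φ̂`, and the infimum over the larger set is smaller.
-/

section Lift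

universe u v

variable {Ω : Type u} {Ω' : Type v} [Fintype Ω] [DecidableEq Ω] [Fintype Ω']

def IsLift (π : Ω → ℝ) (K : Ω → Ω → ℝ) (πhat : Ω' → ℝ) (Khat : Ω' → Ω' → ℝ) (f : Ω' → Ω) :
    Prop :=
  ∀ S A : Finset Ω,
    ∑ x ∈ S, π x * (∑ a ∈ A, K x a)
      = ∑ x ∈ univ.filter (fun x' => f x' ∈ S),
          πhat x * (∑ y ∈ univ.filter (fun y' => f y' ∈ A), Khat x y)

variable {π : Ω → ℝ} {K : Ω → Ω → ℝ} {πhat : Ω' → ℝ} {Khat : Ω' → Ω' → ℝ} {f : Ω' → Ω}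

theorem IsLift.sum_preimage_eq (hlift : IsLift π K πhat Khat f)
    (hKrow : ∀ x, ∑ y, K x y = 1) (hKhrow : ∀ x, ∑ y, Khat x y = 1) (S : Finset Ω) :
    ∑ x ∈ univ.filter (fun x' => f x' ∈ S), πhat x = ∑ x ∈ S, π x := by
  simpa [hKrow, hKhrow] using (hlift S univ).symm

theorem IsLift.flow_preimage_eq [DecidableEq Ω'] (hlift : IsLift π K πhat Khat f) (S : Finset Ω) :
    ∑ x ∈ univ.filter (fun x' => f x' ∈ S),
        ∑ y ∈ (univ.filter (fun x' => f x' ∈ S))ᶜ, πhat x * Khat x y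
      = ∑ x ∈ S, ∑ y ∈ Sᶜ, π x * K x y := by
  have hcompl : (univ.filter (fun x' => f x' ∈ S))ᶜ = univ.filter (fun y' => f y' ∈ Sᶜ) := by
    ext; simp
  simpa [hcompl, Finset.mul_sum] using (hlift S Sᶜ).symm

end Lift

section Conductance

universe u v

variable {Ω : Type u} {Ω' : Type v} [Fintype Ω] [DecidableEq Ω] [Fintype Ω'] [DecidableEq Ω']

def conductanceRatios (π : Ω → ℝ) (K : Ω → Ω → ℝ) : Set ℝ :=
  {r : ℝ | ∃ S : Finset Ω,
    0 < ∑ x ∈ S, π x ∧ (∑ x ∈ S, π x) ≤ 1/2 ∧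
    r = (∑ x ∈ S, ∑ y ∈ Sᶜ, π x * K x y) / ∑ x ∈ S, π x}

theorem bddBelow_conductanceRatios {π : Ω → ℝ} {K : Ω → Ω → ℝ}
    (hπ : ∀ x, 0 ≤ π x) (hK : ∀ x y, 0 ≤ K x y) : BddBelow (conductanceRatios π K) := by
  refine ⟨0, ?_⟩
  rintro r ⟨S, hpos, -, rfl⟩
  exact div_nonneg (sum_nonneg fun x _ => sum_nonneg fun y _ => mul_nonneg (hπ x) (hK x y))
    hpos.le

theorem IsLift.conductanceRatios_subset {π : Ω → ℝ} {K : Ω → Ω → ℝ} {πhat : Ω' → ℝ}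
    {Khat : Ω' → Ω' → ℝ} {f : Ω' → Ω} (hlift : IsLift π K πhat Khat f)
    (hKrow : ∀ x, ∑ y, K x y = 1) (hKhrow : ∀ x, ∑ y, Khat x y = 1) :
    conductanceRatios π K ⊆ conductanceRatios πhat Khat := by
  rintro r ⟨S, hpos, hhalf, rfl⟩
  have hmass := hlift.sum_preimage_eq hKrow hKhrow S
  refine ⟨univ.filter (fun x' => f x' ∈ S), hmass ▸ hpos, hmass ▸ hhalf, ?_⟩
  rw [hmass, hlift.flow_preimage_eq]

end Conductance

theorem lift_conductance_le_general {Ω Ω' : Type*} [Fintype Ω] [DecidableEq Ω]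
    [Fintype Ω'] [DecidableEq Ω']
    (K : Ω → Ω → ℝ) (Khat : Ω' → Ω' → ℝ) (π : Ω → ℝ) (πhat : Ω' → ℝ)
    (hKrow : ∀ x, ∑ y, K x y = 1)
    (hKhnonneg : ∀ x y, 0 ≤ Khat x y) (hKhrow : ∀ x, ∑ y, Khat x y = 1)
    (hπhnonneg : ∀ x, 0 ≤ πhat x)
    (f : Ω' → Ω)
    (hlift : ∀ S A : Finset Ω,
      ∑ x ∈ S, π x * (∑ a ∈ A, K x a)
        = ∑ x ∈ univ.filter (fun x' => f x' ∈ S),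
            πhat x * (∑ y ∈ univ.filter (fun y' => f y' ∈ A), Khat x y))
    (hne : ∃ S : Finset Ω, 0 < ∑ x ∈ S, π x ∧ (∑ x ∈ S, π x) ≤ 1/2)
    (Φ Φhat : ℝ)
    (hΦ : Φ = sInf {r : ℝ | ∃ S : Finset Ω,
      0 < ∑ x ∈ S, π x ∧ (∑ x ∈ S, π x) ≤ 1/2 ∧
      r = (∑ x ∈ S, ∑ y ∈ Sᶜ, π x * K x y) / ∑ x ∈ S, π x})
    (hΦhat : Φhat = sInf {r : ℝ | ∃ S : Finset Ω',
      0 < ∑ x ∈ S, πhat x ∧ (∑ x ∈ S, πhat x) ≤ 1/2 ∧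
      r = (∑ x ∈ S, ∑ y ∈ Sᶜ, πhat x * Khat x y) / ∑ x ∈ S, πhat x}) :
    Φhat ≤ Φ := by
  subst hΦ hΦhat
  change sInf (conductanceRatios πhat Khat) ≤ sInf (conductanceRatios π K)
  obtain ⟨S, hpos, hhalf⟩ := hne
  exact csInf_le_csInf (bddBelow_conductanceRatios hπhnonneg hKhnonneg) ⟨_, S, hpos, hhalf, rfl⟩
    (IsLift.conductanceRatios_subset hlift hKrow hKhrow)

/-- If `K̂` is a lift of `K` (finite state spaces) via `f`, then the conductance of
the lifted chain is at most the conductance of the original chain: `Φ̂ ≤ Φ`. -/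
theorem lift_conductance_le {Ω Ω' : Type*} [Fintype Ω] [DecidableEq Ω]
    [Fintype Ω'] [DecidableEq Ω']
    (K : Ω → Ω → ℝ) (Khat : Ω' → Ω' → ℝ) (π : Ω → ℝ) (πhat : Ω' → ℝ)
    (hKnonneg : ∀ x y, 0 ≤ K x y) (hKrow : ∀ x, ∑ y, K x y = 1)
    (hKhnonneg : ∀ x y, 0 ≤ Khat x y) (hKhrow : ∀ x, ∑ y, Khat x y = 1)
    (hπnonneg : ∀ x, 0 ≤ π x) (hπsum : ∑ x, π x = 1)
    (hπhnonneg : ∀ x, 0 ≤ πhat x) (hπhsum : ∑ x, πhat x = 1)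
    (hstat : ∀ y, ∑ x, π x * K x y = π y)
    (hstat' : ∀ y, ∑ x, πhat x * Khat x y = πhat y)
    (f : Ω' → Ω)
    (hlift : ∀ S A : Finset Ω,
      ∑ x ∈ S, π x * (∑ a ∈ A, K x a)
        = ∑ x ∈ univ.filter (fun x' => f x' ∈ S),
            πhat x * (∑ y ∈ univ.filter (fun y' => f y' ∈ A), Khat x y))
    (hne : ∃ S : Finset Ω, 0 < ∑ x ∈ S, π x ∧ (∑ x ∈ S, π x) ≤ 1/2)
    (Φ Φhat : ℝ)
    (hΦ : Φ = sInf {r : ℝ | ∃ S : Finset Ω,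
      0 < ∑ x ∈ S, π x ∧ (∑ x ∈ S, π x) ≤ 1/2 ∧
      r = (∑ x ∈ S, ∑ y ∈ Sᶜ, π x * K x y) / ∑ x ∈ S, π x})
    (hΦhat : Φhat = sInf {r : ℝ | ∃ S : Finset Ω',
      0 < ∑ x ∈ S, πhat x ∧ (∑ x ∈ S, πhat x) ≤ 1/2 ∧
      r = (∑ x ∈ S, ∑ y ∈ Sᶜ, πhat x * Khat x y) / ∑ x ∈ S, πhat x}) :
    Φhat ≤ Φ :=
  lift_conductance_le_general K Khat π πhat hKrow hKhnonneg hKhrow hπhnonneg f hlift hne Φ Φhat hΦ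
    hΦhat
end
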